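/- arXiv:1908.04228 — 3 statements merged into one kernel-verified Lean document; each statement's English description precedes it below -/
import Mathlib

section
/- Let A_1, …, A_m be symmetric n×n complex matrices and let λ_0 ∈ ℂ^m be such that A(λ_0) = Σ_{j=1}^m (λ_0)_j A_j is invertible (i.e., rank A(λ_0) = n). Then A_1, …, A_m are simultaneously diagonalizable via congruence if and only if the matrices A(λ_0)^{-1}A_1, …, A(λ_0)^{-1}A_m are simultaneously diagonalizable via similarity. -/
/-!
If `Pᵀ A_j P = D_j` are all diagonal, then so is `D = Pᵀ A(λ₀) P`, and
`P⁻¹ A(λ₀)⁻¹ A_j P = D⁻¹ D_j`. Conversely, if the `E_j = P⁻¹ A(λ₀)⁻¹ A_j P` are diagonal, put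
`M = Pᵀ A(λ₀) P`, so that `Pᵀ A_j P = M E_j`. Both `M` and `M E_j` are symmetric, hence `M`
commutes with every `E_j`: it is block diagonal along the joint eigenvalue pattern of the `E_j`.
Diagonalizing each block of `M` by congruence (char ≠ 2) yields a block diagonal `R`, which still
commutes with the `E_j`, and `(P R)ᵀ A_j (P R) = (Rᵀ M R) E_j` is diagonal.
-/

open Matrix

namespace Matrix

variable {ι : Type*}

theorem isDiag_sum {α J : Type*} [AddCommMonoid α] (s : Finset J) {D : J → Matrix ι ι α}
    (hD : ∀ j ∈ s, (D j).IsDiag) : (∑ j ∈ s, D j).IsDiag :=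
  Finset.sum_induction D IsDiag (fun _ _ ↦ IsDiag.add) isDiag_zero hD

theorem isDiag_blockDiagonal' {α o : Type*} {m : o → Type*} [Zero α] [DecidableEq o]
    {M : ∀ k, Matrix (m k) (m k) α} (hM : ∀ k, (M k).IsDiag) : (blockDiagonal' M).IsDiag := by
  rintro ⟨k, i⟩ ⟨k', j⟩ hij
  obtain rfl | hk := eq_or_ne k k'
  · rw [blockDiagonal'_apply_eq]
    exact hM k fun h ↦ hij (by rw [h])
  · exact blockDiagonal'_apply_ne M i j hk

variable [Fintype ι]

section CommRing

variable {R : Type*} [CommRing R]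

theorem IsSymm.transpose_mul_mul {A : Matrix ι ι R} (hA : A.IsSymm) (P : Matrix ι ι R) :
    (Pᵀ * A * P).IsSymm := by
  rw [IsSymm, transpose_mul, transpose_mul, transpose_transpose, hA.eq, Matrix.mul_assoc]

theorem IsSymm.commute_of_isSymm_mul {M N : Matrix ι ι R} (hM : M.IsSymm) (hN : N.IsSymm)
    (hMN : (M * N).IsSymm) : Commute M N := by
  rw [Commute, SemiconjBy, ← hMN.eq, transpose_mul, hM.eq, hN.eq]

variable [DecidableEq ι]

theorem IsDiag.mul {D E : Matrix ι ι R} (hD : D.IsDiag) (hE : E.IsDiag) : (D * E).IsDiag := by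
  rw [← hD.diagonal_diag, ← hE.diagonal_diag, diagonal_mul_diagonal]
  exact isDiag_diagonal _

theorem IsDiag.inv {D : Matrix ι ι R} (hD : D.IsDiag) : D⁻¹.IsDiag := by
  rw [← hD.diagonal_diag, inv_diagonal]
  exact isDiag_diagonal _

theorem IsDiag.commute_iff [NoZeroDivisors R] {D M : Matrix ι ι R} (hD : D.IsDiag) :
    Commute D M ↔ ∀ i k, D i i ≠ D k k → M i k = 0 := by
  rw [← hD.diagonal_diag, Commute, SemiconjBy, ← Matrix.ext_iff]
  simp only [diagonal_mul, mul_diagonal, diag_apply, diagonal_apply_eq]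
  refine forall₂_congr fun i k ↦ ?_
  rw [mul_comm (M i k), ← sub_eq_zero, ← sub_mul, mul_eq_zero, sub_eq_zero, or_iff_not_imp_left]

theorem inv_mul_inv_mul_mul_eq {P : Matrix ι ι R} (hP : IsUnit P) (B A : Matrix ι ι R) :
    P⁻¹ * (B⁻¹ * A) * P = (Pᵀ * B * P)⁻¹ * (Pᵀ * A * P) := by
  have hPt : IsUnit Pᵀ.det := by rwa [det_transpose, ← isUnit_iff_isUnit_det]
  simp only [mul_inv_rev, Matrix.mul_assoc, nonsing_inv_mul_cancel_left _ _ hPt]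

end CommRing

section Field

variable [DecidableEq ι] {K : Type*} [Field K] [Invertible (2 : K)]

theorem IsSymm.exists_isUnit_isDiag_transpose_mul_mul {M : Matrix ι ι K} (hM : M.IsSymm) :
    ∃ P : Matrix ι ι K, IsUnit P ∧ (Pᵀ * M * P).IsDiag := by
  let b := Pi.basisFun K ι
  obtain ⟨v, hv⟩ := LinearMap.BilinForm.exists_orthogonal_basis
    (LinearMap.BilinForm.isSymm_iff.mp ((isSymm_toBilin_iff_isSymm b).mpr hM))
  let w := v.reindex (v.indexEquiv b)
  have := b.invertibleToMatrix w
  refine ⟨b.toMatrix w, isUnit_of_invertible _, ?_⟩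
  rw [← LinearMap.BilinForm.toMatrix_toBilin b M, LinearMap.BilinForm.toMatrix_mul_basis_toMatrix]
  intro i j hij
  simpa [w, LinearMap.BilinForm.toMatrix_apply] using
    hv ((v.indexEquiv b).symm.injective.ne hij)

theorem IsSymm.exists_isUnit_fiberwise_isDiag_transpose_mul_mul {β : Type*} [Fintype β]
    [DecidableEq β] {M : Matrix ι ι K} (hM : M.IsSymm) (f : ι → β)
    (hMf : ∀ i k, f i ≠ f k → M i k = 0) :
    ∃ R : Matrix ι ι K, IsUnit R ∧ (∀ i k, f i ≠ f k → R i k = 0) ∧ (Rᵀ * M * R).IsDiag := by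
  let e := Equiv.sigmaFiberEquiv f
  choose P hP hPM using fun b ↦
    (hM.submatrix ((↑) : {i // f i = b} → ι)).exists_isUnit_isDiag_transpose_mul_mul
  have hM_eq : M.submatrix e e = blockDiagonal' fun b ↦ M.submatrix (↑) (↑) := by
    ext ⟨b, i⟩ ⟨b', k⟩
    obtain rfl | hb := eq_or_ne b b'
    · simp [e]
    · rw [blockDiagonal'_apply_ne _ _ _ hb]
      exact hMf i k (by rwa [i.2, k.2])
  refine ⟨(blockDiagonal' P).submatrix e.symm e.symm, ?_, fun i k hik ↦ ?_, ?_⟩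
  · have hunit : IsUnit (blockDiagonal' P) :=
      (Pi.isUnit_iff.mpr hP).map (blockDiagonal'RingHom _ K)
    exact hunit.map (reindexAlgEquiv K K e)
  · exact blockDiagonal'_apply_ne P _ _ hik
  · rw [← submatrix_id_id M, ← e.self_comp_symm, ← submatrix_submatrix, hM_eq, transpose_submatrix,
      submatrix_mul_equiv, submatrix_mul_equiv, blockDiagonal'_transpose, ← blockDiagonal'_mul,
      ← blockDiagonal'_mul]
    exact (isDiag_blockDiagonal' hPM).submatrix e.symm.injective

theorem IsSymm.exists_isUnit_commute_isDiag_transpose_mul_mul {J : Type*} {M : Matrix ι ι K}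
    (hM : M.IsSymm) {D : J → Matrix ι ι K} (hD : ∀ j, (D j).IsDiag)
    (hDM : ∀ j, Commute (D j) M) :
    ∃ R : Matrix ι ι K, IsUnit R ∧ (∀ j, Commute (D j) R) ∧ (Rᵀ * M * R).IsDiag := by
  classical
  -- `Set.rangeFactorization` only makes the codomain of the eigenvalue pattern finite.
  let f := Set.rangeFactorization fun i j ↦ D j i i
  have hf : ∀ i k, f i ≠ f k ↔ ∃ j, D j i i ≠ D j k k := by
    simp [f, Set.rangeFactorization, Function.ne_iff]
  obtain ⟨R, hR, hRf, hRM⟩ := hM.exists_isUnit_fiberwise_isDiag_transpose_mul_mul f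
    fun i k hik ↦ by
      obtain ⟨j, hj⟩ := (hf i k).mp hik
      exact (hD j).commute_iff.mp (hDM j) i k hj
  exact ⟨R, hR, fun j ↦ (hD j).commute_iff.mpr fun i k h ↦ hRf i k ((hf i k).mpr ⟨j, h⟩), hRM⟩

theorem exists_isUnit_forall_isDiag_transpose_mul_mul_of_isDiag_conj {J : Type*}
    {A : J → Matrix ι ι K} (hA : ∀ j, (A j).IsSymm) {B : Matrix ι ι K} (hB : IsUnit B)
    (hB_symm : B.IsSymm) {P : Matrix ι ι K} (hP : IsUnit P)
    (hE : ∀ j, (P⁻¹ * (B⁻¹ * A j) * P).IsDiag) :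
    ∃ Q : Matrix ι ι K, IsUnit Q ∧ ∀ j, (Qᵀ * A j * Q).IsDiag := by
  set E := fun j ↦ P⁻¹ * (B⁻¹ * A j) * P
  set M := Pᵀ * B * P
  have hM : IsUnit M := ((isUnit_transpose P).mpr hP |>.mul hB).mul hP
  have hM_symm : M.IsSymm := hB_symm.transpose_mul_mul P
  have hA_eq (j) : Pᵀ * A j * P = M * E j := by
    rw [show E j = _ from inv_mul_inv_mul_mul_eq hP B (A j),
      mul_nonsing_inv_cancel_left _ _ ((isUnit_iff_isUnit_det M).mp hM)]
  have hME (j) : Commute (E j) M :=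
    (hM_symm.commute_of_isSymm_mul (hE j).isSymm (hA_eq j ▸ (hA j).transpose_mul_mul P)).symm
  obtain ⟨R, hR, hRE, hRM⟩ := hM_symm.exists_isUnit_commute_isDiag_transpose_mul_mul hE hME
  refine ⟨P * R, hP.mul hR, fun j ↦ ?_⟩
  have hPRA : (P * R)ᵀ * A j * (P * R) = (Rᵀ * M * R) * E j :=
    calc (P * R)ᵀ * A j * (P * R) = Rᵀ * (Pᵀ * A j * P) * R := by
          simp only [transpose_mul, Matrix.mul_assoc]
      _ = Rᵀ * M * (E j * R) := by rw [hA_eq j]; simp only [Matrix.mul_assoc]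
      _ = (Rᵀ * M * R) * E j := by rw [(hRE j).eq, Matrix.mul_assoc (Rᵀ * M)]
  exact hPRA ▸ hRM.mul (hE j)

end Field

end Matrix

/-- Let A_1, …, A_m be symmetric n×n complex matrices and λ₀ ∈ ℂ^m with
A(λ₀) = Σ_j (λ₀)_j A_j invertible. Then A_1, …, A_m are simultaneously diagonalizable
via congruence iff A(λ₀)⁻¹A_1, …, A(λ₀)⁻¹A_m are simultaneously diagonalizable via
similarity. -/
theorem sdc_iff_sds_of_invertible_pencil (n m : ℕ)
    (A : Fin m → Matrix (Fin n) (Fin n) ℂ) (hsymm : ∀ j, (A j)ᵀ = A j)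
    (lam₀ : Fin m → ℂ) (hinv : IsUnit (∑ j, lam₀ j • A j)) :
    (∃ P : Matrix (Fin n) (Fin n) ℂ, IsUnit P ∧ ∀ j, (Pᵀ * A j * P).IsDiag) ↔
      (∃ P : Matrix (Fin n) (Fin n) ℂ, IsUnit P ∧
        ∀ j, (P⁻¹ * ((∑ k, lam₀ k • A k)⁻¹ * A j) * P).IsDiag) := by
  set B := ∑ k, lam₀ k • A k
  constructor
  · rintro ⟨P, hP, hPA⟩
    have hPB : (Pᵀ * B * P).IsDiag := by
      simp only [B, Matrix.mul_sum, Matrix.sum_mul, Matrix.mul_smul, Matrix.smul_mul]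
      exact isDiag_sum _ fun k _ ↦ (hPA k).smul (lam₀ k)
    exact ⟨P, hP, fun j ↦ inv_mul_inv_mul_mul_eq hP B (A j) ▸ hPB.inv.mul (hPA j)⟩
  · rintro ⟨P, hP, hE⟩
    have : Invertible (2 : ℂ) := invertibleOfNonzero two_ne_zero
    have hB_symm : B.IsSymm := by simp [B, IsSymm, transpose_sum, hsymm]
    exact exists_isUnit_forall_isDiag_transpose_mul_mul_of_isDiag_conj hsymm hinv hB_symm hP hE
end

section
/- Let A_1, …, A_m be symmetric n×n complex matrices and let λ_0, λ_1 ∈ ℂ^m both be such that A(λ_0) = Σ_j (λ_0)_j A_j and A(λ_1) = Σ_j (λ_1)_j A_j are invertible. Then the matrices A(λ_0)^{-1}A_1, …, A(λ_0)^{-1}A_m are simultaneously diagonalizable via similarity if and only if the matrices A(λ_1)^{-1}A_1, …, A(λ_1)^{-1}A_m are simultaneously diagonalizable via similarity. -/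
/-!
If `P` diagonalizes every `A(λ₀)⁻¹ A_j`, it also diagonalizes their linear combination
`A(λ₀)⁻¹ A(λ₁)`, hence its inverse, and therefore each
`A(λ₁)⁻¹ A_j = (A(λ₀)⁻¹ A(λ₁))⁻¹ (A(λ₀)⁻¹ A_j)`. The same `P` works for both points of the pencil.
-/

open Matrix

namespace Matrix

variable {n α : Type*}

theorem IsDiag.sum {ι : Type*} [AddCommMonoid α] {s : Finset ι} {A : ι → Matrix n n α}
    (h : ∀ i ∈ s, (A i).IsDiag) : (∑ i ∈ s, A i).IsDiag :=
  Finset.sum_induction _ IsDiag (fun _ _ => IsDiag.add) isDiag_zero h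

variable [Fintype n] [DecidableEq n]

theorem IsDiag.mul_s4 [NonUnitalNonAssocSemiring α] {A B : Matrix n n α} (ha : A.IsDiag)
    (hb : B.IsDiag) : (A * B).IsDiag := by
  rw [← ha.diagonal_diag, ← hb.diagonal_diag, diagonal_mul_diagonal]
  exact isDiag_diagonal _

theorem IsDiag.inv_s4 [CommRing α] {A : Matrix n n α} (ha : A.IsDiag) : A⁻¹.IsDiag := by
  rw [← ha.diagonal_diag, inv_diagonal]
  exact isDiag_diagonal _

variable [CommRing α] {P : Matrix n n α}

theorem conj_mul (hP : IsUnit P) (X Y : Matrix n n α) :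
    P⁻¹ * (X * Y) * P = (P⁻¹ * X * P) * (P⁻¹ * Y * P) := by
  have hPd := (isUnit_iff_isUnit_det P).1 hP
  simp only [Matrix.mul_assoc, mul_nonsing_inv_cancel_left _ _ hPd]

theorem conj_inv (hP : IsUnit P) (X : Matrix n n α) :
    (P⁻¹ * X * P)⁻¹ = P⁻¹ * X⁻¹ * P := by
  rw [mul_inv_rev, mul_inv_rev, nonsing_inv_nonsing_inv _ ((isUnit_iff_isUnit_det P).1 hP),
    Matrix.mul_assoc]

theorem isDiag_conj_mul (hP : IsUnit P) {X Y : Matrix n n α} (hX : (P⁻¹ * X * P).IsDiag)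
    (hY : (P⁻¹ * Y * P).IsDiag) : (P⁻¹ * (X * Y) * P).IsDiag := by
  rw [conj_mul hP]
  exact hX.mul_s4 hY

theorem isDiag_conj_inv (hP : IsUnit P) {X : Matrix n n α} (hX : (P⁻¹ * X * P).IsDiag) :
    (P⁻¹ * X⁻¹ * P).IsDiag := by
  rw [← conj_inv hP]
  exact hX.inv_s4

theorem isDiag_conj_sum_smul {ι : Type*} [Fintype ι] {X : ι → Matrix n n α}
    (hX : ∀ i, (P⁻¹ * X i * P).IsDiag) (c : ι → α) :
    (P⁻¹ * (∑ i, c i • X i) * P).IsDiag := by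
  rw [Finset.mul_sum, Finset.sum_mul]
  refine IsDiag.sum fun i _ => ?_
  rw [mul_smul_comm, smul_mul_assoc]
  exact (hX i).smul (c i)

theorem inv_mul_eq_inv_inv_mul_mul_inv_mul {B₀ : Matrix n n α} (hB₀ : IsUnit B₀)
    (B₁ X : Matrix n n α) : B₁⁻¹ * X = (B₀⁻¹ * B₁)⁻¹ * (B₀⁻¹ * X) := by
  rw [mul_inv_rev, nonsing_inv_nonsing_inv _ ((isUnit_iff_isUnit_det B₀).1 hB₀), Matrix.mul_assoc,
    mul_nonsing_inv_cancel_left _ _ ((isUnit_iff_isUnit_det B₀).1 hB₀)]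

theorem isDiag_conj_pencil_inv_mul {ι : Type*} [Fintype ι] (A : ι → Matrix n n α)
    {lam₀ : ι → α} (hinv₀ : IsUnit (∑ k, lam₀ k • A k)) (hP : IsUnit P)
    (hD : ∀ j, (P⁻¹ * ((∑ k, lam₀ k • A k)⁻¹ * A j) * P).IsDiag) (lam₁ : ι → α) (j : ι) :
    (P⁻¹ * ((∑ k, lam₁ k • A k)⁻¹ * A j) * P).IsDiag := by
  have hcomb : (∑ k, lam₀ k • A k)⁻¹ * ∑ k, lam₁ k • A k =
      ∑ k, lam₁ k • ((∑ k, lam₀ k • A k)⁻¹ * A k) := by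
    simp only [Finset.mul_sum, mul_smul_comm]
  rw [inv_mul_eq_inv_inv_mul_mul_inv_mul hinv₀ (∑ k, lam₁ k • A k), hcomb]
  exact isDiag_conj_mul hP (isDiag_conj_inv hP (isDiag_conj_sum_smul hD lam₁)) (hD j)

end Matrix

theorem sds_independent_of_pencil_point_general (n m : ℕ)
    (A : Fin m → Matrix (Fin n) (Fin n) ℂ)
    (lam₀ lam₁ : Fin m → ℂ)
    (hinv₀ : IsUnit (∑ j, lam₀ j • A j)) (hinv₁ : IsUnit (∑ j, lam₁ j • A j)) :
    (∃ P : Matrix (Fin n) (Fin n) ℂ, IsUnit P ∧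
        ∀ j, (P⁻¹ * ((∑ k, lam₀ k • A k)⁻¹ * A j) * P).IsDiag) ↔
      (∃ P : Matrix (Fin n) (Fin n) ℂ, IsUnit P ∧
        ∀ j, (P⁻¹ * ((∑ k, lam₁ k • A k)⁻¹ * A j) * P).IsDiag) :=
  ⟨fun ⟨P, hP, hD⟩ => ⟨P, hP, isDiag_conj_pencil_inv_mul A hinv₀ hP hD lam₁⟩,
    fun ⟨P, hP, hD⟩ => ⟨P, hP, isDiag_conj_pencil_inv_mul A hinv₁ hP hD lam₀⟩⟩

/-- Let A_1, …, A_m be symmetric n×n complex matrices and λ₀, λ₁ ∈ ℂ^m be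
such that A(λ₀) and A(λ₁) are both invertible. Then A(λ₀)⁻¹A_1, …, A(λ₀)⁻¹A_m are SDS
iff A(λ₁)⁻¹A_1, …, A(λ₁)⁻¹A_m are SDS. -/
theorem sds_independent_of_pencil_point (n m : ℕ)
    (A : Fin m → Matrix (Fin n) (Fin n) ℂ) (hsymm : ∀ j, (A j)ᵀ = A j)
    (lam₀ lam₁ : Fin m → ℂ)
    (hinv₀ : IsUnit (∑ j, lam₀ j • A j)) (hinv₁ : IsUnit (∑ j, lam₁ j • A j)) :
    (∃ P : Matrix (Fin n) (Fin n) ℂ, IsUnit P ∧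
        ∀ j, (P⁻¹ * ((∑ k, lam₀ k • A k)⁻¹ * A j) * P).IsDiag) ↔
      (∃ P : Matrix (Fin n) (Fin n) ℂ, IsUnit P ∧
        ∀ j, (P⁻¹ * ((∑ k, lam₁ k • A k)⁻¹ * A j) * P).IsDiag) :=
  sds_independent_of_pencil_point_general n m A lam₀ lam₁ hinv₀ hinv₁
end

section
/- Let A_1, …, A_m be symmetric n×n complex matrices with maximum pencil rank r, where A(λ) = Σ_{j=1}^m λ_j A_j. Then A_1, …, A_m are simultaneously diagonalizable via congruence if and only if dim(⋂_{j=1}^m ker A_j) = n − r and there exists an invertible P ∈ M_n(ℂ) such that P^T A_j P = D̃_j ⊕ 0_{n−r} for all j, where each D̃_j ∈ M_r(ℂ) is diagonal. Moreover, for any such P and D̃_1, …, D̃_m and any λ_0 ∈ ℂ^m with rank A(λ_0) = r, the matrix Σ_{j=1}^m (λ_0)_j D̃_j is an invertible r×r matrix. -/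
/-!
Conjugating by an invertible `P` changes neither ranks nor the dimension of kernels, so one may
assume the `A j` are diagonal, `A j = diagonal (d j)`. Over the infinite field `ℂ` a generic
`λ₀` makes `∑ j, λ₀ j * d j i` nonzero wherever some `d j i` is nonzero; then the kernel of
`A(λ₀)` is the common kernel of the `A j`, which makes `rank A(λ₀)` the maximal pencil rank `r`
and gives `dim ⋂ ker A j = n - r`. A permutation moves the `r` indices in the support of `d` to
the front, producing the block form. Conversely, `Pᵀ A(λ₀) P = (∑ j, λ₀ j • D̃ j) ⊕ 0`, and the
rank of the left side is `r`, so the `r × r` block is invertible.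
-/

open Matrix

/-- For `B ∈ M_r(ℂ)`, the block-diagonal matrix `B ⊕ 0_{n−r} ∈ M_n(ℂ)` having `B` in
the top-left r×r corner and zeros elsewhere. -/
def blockOplusZero (n r : ℕ) (B : Matrix (Fin r) (Fin r) ℂ) : Matrix (Fin n) (Fin n) ℂ :=
  fun i k => if h : (i : ℕ) < r ∧ (k : ℕ) < r then B ⟨i, h.1⟩ ⟨k, h.2⟩ else 0

theorem Module.Dual.exists_forall_apply_ne_zero {K E ι : Type*} [Field K] [Infinite K]
    [AddCommGroup E] [Module K E] [Finite ι] (f : ι → Module.Dual K E) (hf : ∀ i, f i ≠ 0) :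
    ∃ x, ∀ i, f i x ≠ 0 := by
  by_contra! h
  obtain ⟨i, hi⟩ := Subspace.exists_eq_top_of_iUnion_eq_univ (p := fun i => LinearMap.ker (f i))
    (Set.iUnion_eq_univ_iff.mpr fun x => h x)
  exact hf i (LinearMap.ker_eq_top.mp hi)

theorem exists_sum_mul_ne_zero_iff {K ι κ : Type*} [Field K] [Infinite K] [Fintype ι] [Finite κ]
    (d : ι → κ → K) :
    ∃ lam₀ : ι → K, ∀ i, ∑ j, lam₀ j * d j i ≠ 0 ↔ ∃ j, d j i ≠ 0 := by
  classical
  let f : {i // ∃ j, d j i ≠ 0} → Module.Dual K (ι → K) :=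
    fun i => ∑ j, d j i • LinearMap.proj j
  have hf : ∀ i lam, f i lam = ∑ j, lam j * d j i := fun i lam => by
    simp [f, mul_comm]
  obtain ⟨lam₀, hlam₀⟩ := Module.Dual.exists_forall_apply_ne_zero f fun ⟨i, j, hj⟩ hi => hj <| by
    simpa [hf, Pi.single_apply] using LinearMap.congr_fun hi (Pi.single j 1)
  refine ⟨lam₀, fun i => ⟨fun h => ?_, fun h => by simpa [hf] using hlam₀ ⟨i, h⟩⟩⟩
  by_contra! h'
  simp [h'] at h

theorem Fin.exists_perm_iff_lt_of_card_eq {n r : ℕ} {q : Fin n → Prop}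
    (hq : Nat.card {i // q i} = r) : ∃ σ : Equiv.Perm (Fin n), ∀ i, q (σ i) ↔ (i : ℕ) < r := by
  classical
  have hrn : r ≤ n := hq ▸ (Finite.card_subtype_le q).trans_eq (Nat.card_fin n)
  let e : {i : Fin n // (i : ℕ) < r} ≃ {i // q i} :=
    Fintype.equivOfCardEq (by rw [Fintype.card_fin_lt_of_le hrn, ← Nat.card_eq_fintype_card, hq])
  exact ⟨e.extendSubtype, fun i =>
    ⟨fun h => by_contra fun hi => e.extendSubtype_not_mem i hi h, e.extendSubtype_mem i⟩⟩

namespace Matrix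

theorem sum_smul_diagonal {R n ι : Type*} [Semiring R] [Fintype ι] [DecidableEq n]
    (d : ι → n → R) (lam : ι → R) :
    ∑ j, lam j • diagonal (d j) = diagonal fun i => ∑ j, lam j * d j i := by
  ext i k
  rcases eq_or_ne i k with rfl | h <;> simp [sum_apply, diagonal_apply_ne, *]

theorem transpose_mul_sum_smul_mul {R n ι : Type*} [CommSemiring R] [Fintype n] [Fintype ι]
    (P : Matrix n n R) (A : ι → Matrix n n R) (lam : ι → R) :
    Pᵀ * (∑ j, lam j • A j) * P = ∑ j, lam j • (Pᵀ * A j * P) := by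
  simp only [Finset.mul_sum, Finset.sum_mul, Matrix.mul_smul, Matrix.smul_mul]

theorem transpose_permMatrix_inv_mul_mul {R n : Type*} [Semiring R] [Fintype n] [DecidableEq n]
    (σ : Equiv.Perm n) (M : Matrix n n R) :
    (σ⁻¹.permMatrix R)ᵀ * M * σ⁻¹.permMatrix R = M.submatrix σ σ := by
  rw [transpose_permMatrix, inv_inv, PEquiv.toMatrix_toPEquiv_mul, PEquiv.mul_toMatrix_toPEquiv]
  rfl

theorem isUnit_permMatrix {R n : Type*} [CommRing R] [Fintype n] [DecidableEq n]
    (σ : Equiv.Perm n) : IsUnit (σ.permMatrix R) := by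
  rw [isUnit_iff_isUnit_det, det_permutation]
  exact (Equiv.Perm.sign σ).isUnit.map (Int.castRingHom R)

section Field

variable {K n ι : Type*} [Field K] [Fintype n] [Fintype ι]

theorem isUnit_of_rank_eq_card [DecidableEq n] {A : Matrix n n K}
    (h : A.rank = Fintype.card n) : IsUnit A := by
  rw [← mulVec_surjective_iff_isUnit, ← coe_mulVecLin, ← LinearMap.range_eq_top]
  exact Submodule.eq_top_of_finrank_eq (by rw [← rank, h, Module.finrank_fintype_fun_eq_card])

theorem rank_fromBlocks_zero_zero_zero {m p q : Type*} [Fintype m] [Fintype p] [Fintype q]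
    [DecidableEq m] [DecidableEq n] (B : Matrix m n K) :
    (fromBlocks B 0 0 (0 : Matrix p q K)).rank = B.rank := by
  have hB : (fromBlocks B 0 0 (0 : Matrix p q K)).submatrix Sum.inl Sum.inl = B := by
    ext; rfl
  have hfac : fromBlocks B 0 0 (0 : Matrix p q K) =
      fromRows (1 : Matrix m m K) (0 : Matrix p m K) * B * fromCols (1 : Matrix n n K) 0 := by
    rw [fromRows_mul, fromRows_mul_fromCols]
    simp
  refine le_antisymm ?_ (hB ▸ rank_submatrix_le _ _ _)
  rw [hfac]
  exact (rank_mul_le_left _ _).trans (rank_mul_le_right _ _)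

theorem rank_transpose_mul_mul_of_isUnit [DecidableEq n] {P : Matrix n n K} (hP : IsUnit P)
    (M : Matrix n n K) : (Pᵀ * M * P).rank = M.rank := by
  rw [rank_mul_eq_left_of_isUnit_det _ _ ((isUnit_iff_isUnit_det P).mp hP),
    rank_mul_eq_right_of_isUnit_det _ _ (by rwa [det_transpose, ← isUnit_iff_isUnit_det])]

theorem ker_mulVecLin_transpose_mul_mul [DecidableEq n] {P : Matrix n n K} (hP : IsUnit P)
    (M : Matrix n n K) :
    LinearMap.ker (Pᵀ * M * P).mulVecLin = (LinearMap.ker M.mulVecLin).comap P.mulVecLin := by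
  have hinj : Function.Injective Pᵀ.mulVec :=
    mulVec_injective_iff_isUnit.mpr ((isUnit_transpose P).mpr hP)
  ext x
  simp only [LinearMap.mem_ker, Submodule.mem_comap, mulVecLin_apply, ← mulVec_mulVec]
  exact ⟨fun h => hinj (by rw [h, mulVec_zero]), fun h => by rw [h, mulVec_zero]⟩

section Pencil

theorem iInf_ker_le_ker_sum_smul (A : ι → Matrix n n K) (lam : ι → K) :
    ⨅ j, LinearMap.ker (A j).mulVecLin ≤ LinearMap.ker (∑ j, lam j • A j).mulVecLin := by
  intro x hx
  simp only [Submodule.mem_iInf, LinearMap.mem_ker, mulVecLin_apply] at hx ⊢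
  simp [sum_mulVec, smul_mulVec, hx]

variable {A : ι → Matrix n n K} {lam₀ : ι → K}
variable (hgen : ∀ j, LinearMap.ker (∑ j, lam₀ j • A j).mulVecLin ≤ LinearMap.ker (A j).mulVecLin)
include hgen

theorem iInf_ker_eq_ker_sum_smul :
    ⨅ j, LinearMap.ker (A j).mulVecLin = LinearMap.ker (∑ j, lam₀ j • A j).mulVecLin :=
  le_antisymm (iInf_ker_le_ker_sum_smul A lam₀) (le_iInf hgen)

theorem finrank_iInf_ker_eq :
    Module.finrank K ↥(⨅ j, LinearMap.ker (A j).mulVecLin) =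
      Fintype.card n - (∑ j, lam₀ j • A j).rank := by
  have h := LinearMap.finrank_range_add_finrank_ker (∑ j, lam₀ j • A j).mulVecLin
  rw [Module.finrank_fintype_fun_eq_card] at h
  rw [iInf_ker_eq_ker_sum_smul hgen, rank]
  omega

theorem rank_sum_smul_le (lam : ι → K) : (∑ j, lam j • A j).rank ≤ (∑ j, lam₀ j • A j).rank := by
  have hker := Submodule.finrank_mono
    ((iInf_ker_eq_ker_sum_smul hgen).symm.trans_le (iInf_ker_le_ker_sum_smul A lam))
  have h₀ := LinearMap.finrank_range_add_finrank_ker (∑ j, lam₀ j • A j).mulVecLin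
  have h := LinearMap.finrank_range_add_finrank_ker (∑ j, lam j • A j).mulVecLin
  rw [rank, rank]
  omega

theorem iSup_rank_sum_smul_eq :
    ⨆ lam : ι → K, (∑ j, lam j • A j).rank = (∑ j, lam₀ j • A j).rank := by
  have hbdd : BddAbove (Set.range fun lam : ι → K => (∑ j, lam j • A j).rank) :=
    ⟨_, Set.forall_mem_range.mpr (rank_sum_smul_le hgen)⟩
  exact le_antisymm (ciSup_le (rank_sum_smul_le hgen)) (le_ciSup hbdd lam₀)

end Pencil

theorem ker_sum_smul_diagonal_le [DecidableEq n] {lam₀ : ι → K} {d : ι → n → K}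
    (hlam₀ : ∀ i, ∑ j, lam₀ j * d j i ≠ 0 ↔ ∃ j, d j i ≠ 0) (j : ι) :
    LinearMap.ker (∑ j, lam₀ j • diagonal (d j)).mulVecLin ≤
      LinearMap.ker (diagonal (d j)).mulVecLin := by
  intro x hx
  simp only [sum_smul_diagonal, LinearMap.mem_ker, mulVecLin_apply, mulVec_diagonal,
    funext_iff, Pi.zero_apply, mul_eq_zero] at hx ⊢
  intro i
  refine (hx i).imp_left fun h => ?_
  by_contra hd
  exact (hlam₀ i).mpr ⟨j, hd⟩ h

theorem ker_sum_smul_le_of_transpose_mul_mul [DecidableEq n] {P : Matrix n n K} (hP : IsUnit P)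
    {A : ι → Matrix n n K} {lam₀ : ι → K}
    (h : ∀ j, LinearMap.ker (∑ j, lam₀ j • (Pᵀ * A j * P)).mulVecLin ≤
      LinearMap.ker (Pᵀ * A j * P).mulVecLin) (j : ι) :
    LinearMap.ker (∑ j, lam₀ j • A j).mulVecLin ≤ LinearMap.ker (A j).mulVecLin := by
  have hsurj : Function.Surjective P.mulVecLin := mulVec_surjective_iff_isUnit.mpr hP
  have hj := h j
  rwa [← transpose_mul_sum_smul_mul, ker_mulVecLin_transpose_mul_mul hP,
    ker_mulVecLin_transpose_mul_mul hP, Submodule.comap_le_comap_iff_of_surjective hsurj] at hj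

theorem exists_ker_sum_smul_le_of_transpose_mul_mul_eq_diagonal [Infinite K] [DecidableEq n]
    {P : Matrix n n K} (hP : IsUnit P) {A : ι → Matrix n n K} {d : ι → n → K}
    (hd : ∀ j, Pᵀ * A j * P = diagonal (d j)) :
    ∃ lam₀ : ι → K, (∀ j, LinearMap.ker (∑ j, lam₀ j • A j).mulVecLin ≤
      LinearMap.ker (A j).mulVecLin) ∧
      (∑ j, lam₀ j • A j).rank = Nat.card {i // ∃ j, d j i ≠ 0} := by
  classical
  obtain ⟨lam₀, hlam₀⟩ := exists_sum_mul_ne_zero_iff d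
  refine ⟨lam₀, ker_sum_smul_le_of_transpose_mul_mul hP fun j => by
    simpa only [hd] using ker_sum_smul_diagonal_le hlam₀ j, ?_⟩
  rw [← rank_transpose_mul_mul_of_isUnit hP, transpose_mul_sum_smul_mul]
  simp only [hd, sum_smul_diagonal, rank_diagonal, ← Nat.card_eq_fintype_card]
  exact Nat.card_congr (Equiv.subtypeEquivRight hlam₀)

end Field

section BlockOplusZero

variable {ι : Type*} [Fintype ι] {n r : ℕ}

theorem IsDiag.blockOplusZero {B : Matrix (Fin r) (Fin r) ℂ} (hB : B.IsDiag) :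
    (blockOplusZero n r B).IsDiag := by
  intro i k hik
  simp only [_root_.blockOplusZero]
  split_ifs
  · exact hB fun h => hik (Fin.ext (Fin.mk.inj h))
  · rfl

theorem diagonal_eq_blockOplusZero (hrn : r ≤ n) {e : Fin n → ℂ}
    (he : ∀ i : Fin n, r ≤ i → e i = 0) :
    diagonal e = blockOplusZero n r (diagonal fun a => e (Fin.castLE hrn a)) := by
  ext i k
  simp only [_root_.blockOplusZero, diagonal_apply]
  split_ifs <;> grind

theorem sum_smul_blockOplusZero (lam : ι → ℂ) (B : ι → Matrix (Fin r) (Fin r) ℂ) :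
    ∑ j, lam j • blockOplusZero n r (B j) = blockOplusZero n r (∑ j, lam j • B j) := by
  ext i k
  simp only [sum_apply, smul_apply, _root_.blockOplusZero, smul_eq_mul]
  split_ifs <;> simp

theorem rank_blockOplusZero (hrn : r ≤ n) (B : Matrix (Fin r) (Fin r) ℂ) :
    (blockOplusZero n r B).rank = B.rank := by
  let e : Fin r ⊕ Fin (n - r) ≃ Fin n := finSumFinEquiv.trans (finCongr (by omega))
  have he : (blockOplusZero n r B).submatrix e e = fromBlocks B 0 0 0 := by
    ext (a | a) (b | b) <;> simp [e, _root_.blockOplusZero]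
  rw [← rank_submatrix _ e e, he, rank_fromBlocks_zero_zero_zero]

theorem exists_transpose_mul_diagonal_mul_eq_blockOplusZero {κ : Type*} (d : κ → Fin n → ℂ)
    (hsupp : Nat.card {i // ∃ j, d j i ≠ 0} = r) :
    ∃ Q : Matrix (Fin n) (Fin n) ℂ, IsUnit Q ∧ ∃ Dt : κ → Matrix (Fin r) (Fin r) ℂ,
      (∀ j, (Dt j).IsDiag) ∧ ∀ j, Qᵀ * diagonal (d j) * Q = blockOplusZero n r (Dt j) := by
  obtain ⟨σ, hσ⟩ := Fin.exists_perm_iff_lt_of_card_eq hsupp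
  have hrn : r ≤ n := hsupp ▸ (Finite.card_subtype_le _).trans_eq (Nat.card_fin n)
  refine ⟨σ⁻¹.permMatrix ℂ, isUnit_permMatrix _,
    fun j => diagonal fun a => d j (σ (Fin.castLE hrn a)), fun j => isDiag_diagonal _, fun j => ?_⟩
  rw [transpose_permMatrix_inv_mul_mul, submatrix_diagonal_equiv]
  refine diagonal_eq_blockOplusZero hrn fun i hi => ?_
  by_contra h
  exact absurd ((hσ i).mp ⟨j, h⟩) (not_lt.mpr hi)

end BlockOplusZero

end Matrix

theorem sdc_iff_block_diagonal_reduction_general (n m : ℕ)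
    (A : Fin m → Matrix (Fin n) (Fin n) ℂ) (r : ℕ)
    (hr : r = ⨆ lam : Fin m → ℂ, (∑ j, lam j • A j).rank) :
    ((∃ P : Matrix (Fin n) (Fin n) ℂ, IsUnit P ∧ ∀ j, (Pᵀ * A j * P).IsDiag) ↔
      (Module.finrank ℂ ↥(⨅ j, LinearMap.ker (A j).mulVecLin) = n - r ∧
        ∃ P : Matrix (Fin n) (Fin n) ℂ, IsUnit P ∧
          ∃ Dt : Fin m → Matrix (Fin r) (Fin r) ℂ, (∀ j, (Dt j).IsDiag) ∧
            ∀ j, Pᵀ * A j * P = blockOplusZero n r (Dt j))) ∧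
    (∀ (P : Matrix (Fin n) (Fin n) ℂ) (Dt : Fin m → Matrix (Fin r) (Fin r) ℂ),
      IsUnit P → (∀ j, (Dt j).IsDiag) →
      (∀ j, Pᵀ * A j * P = blockOplusZero n r (Dt j)) →
      ∀ lam₀ : Fin m → ℂ, (∑ j, lam₀ j • A j).rank = r →
        IsUnit (∑ j, lam₀ j • Dt j)) := by
  refine ⟨⟨fun ⟨P, hP, hdiag⟩ => ?_, fun ⟨_, P, hP, Dt, hDt, hblock⟩ =>
    ⟨P, hP, fun j => hblock j ▸ (hDt j).blockOplusZero⟩⟩, ?_⟩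
  · obtain ⟨d, hd⟩ : ∃ d : Fin m → Fin n → ℂ, ∀ j, Pᵀ * A j * P = diagonal (d j) :=
      ⟨_, fun j => (hdiag j).diagonal_diag.symm⟩
    obtain ⟨lam₀, hgen, hsupp⟩ := exists_ker_sum_smul_le_of_transpose_mul_mul_eq_diagonal hP hd
    have hrank : r = (∑ j, lam₀ j • A j).rank := hr.trans (iSup_rank_sum_smul_eq hgen)
    obtain ⟨Q, hQ, Dt, hDt, hQd⟩ :=
      exists_transpose_mul_diagonal_mul_eq_blockOplusZero d (hrank.trans hsupp).symm
    refine ⟨by rw [finrank_iInf_ker_eq hgen, Fintype.card_fin, hrank], P * Q, hP.mul hQ, Dt, hDt,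
      fun j => ?_⟩
    rw [← hQd j, ← hd j, transpose_mul]
    simp only [Matrix.mul_assoc]
  · intro P Dt hP _ hblock lam₀ hrank
    have hrn : r ≤ n := hrank ▸ (rank_le_card_height _).trans_eq (Fintype.card_fin n)
    have hconj : Pᵀ * (∑ j, lam₀ j • A j) * P = blockOplusZero n r (∑ j, lam₀ j • Dt j) := by
      simp only [transpose_mul_sum_smul_mul, hblock, sum_smul_blockOplusZero]
    apply isUnit_of_rank_eq_card
    rw [Fintype.card_fin, ← rank_blockOplusZero hrn, ← hconj, rank_transpose_mul_mul_of_isUnit hP,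
      hrank]

/-- Let A_1, …, A_m be symmetric n×n complex matrices with maximum pencil
rank r. Then A_1, …, A_m are SDC iff dim(⋂_j ker A_j) = n − r and there is an invertible
P with Pᵀ A_j P = D̃_j ⊕ 0_{n−r} for diagonal D̃_j ∈ M_r(ℂ).  Moreover, for any such P
and D̃_j and any λ₀ with rank A(λ₀) = r, the matrix Σ_j (λ₀)_j D̃_j is invertible. -/
theorem sdc_iff_block_diagonal_reduction (n m : ℕ)
    (A : Fin m → Matrix (Fin n) (Fin n) ℂ) (hsymm : ∀ j, (A j)ᵀ = A j) (r : ℕ)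
    (hr : r = ⨆ lam : Fin m → ℂ, (∑ j, lam j • A j).rank) :
    ((∃ P : Matrix (Fin n) (Fin n) ℂ, IsUnit P ∧ ∀ j, (Pᵀ * A j * P).IsDiag) ↔
      (Module.finrank ℂ ↥(⨅ j, LinearMap.ker (A j).mulVecLin) = n - r ∧
        ∃ P : Matrix (Fin n) (Fin n) ℂ, IsUnit P ∧
          ∃ Dt : Fin m → Matrix (Fin r) (Fin r) ℂ, (∀ j, (Dt j).IsDiag) ∧
            ∀ j, Pᵀ * A j * P = blockOplusZero n r (Dt j))) ∧
    (∀ (P : Matrix (Fin n) (Fin n) ℂ) (Dt : Fin m → Matrix (Fin r) (Fin r) ℂ),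
      IsUnit P → (∀ j, (Dt j).IsDiag) →
      (∀ j, Pᵀ * A j * P = blockOplusZero n r (Dt j)) →
      ∀ lam₀ : Fin m → ℂ, (∑ j, lam₀ j • A j).rank = r →
        IsUnit (∑ j, lam₀ j • Dt j)) :=
  sdc_iff_block_diagonal_reduction_general n m A r hr
end
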